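/- arXiv:1307.0250 — 4 statements merged into one kernel-verified Lean document; each statement's English description precedes it below -/
import Mathlib

section
/- Let X and Y be metric spaces, K' ⊆ X a subset, p ∈ K', and r' > 0. Let f be defined on K' ∪ B̄(p, r') (closed ball) with values in Y, and suppose dist(f u, f v) ≤ C · dist(u, v) for u, v ∈ K', and dist(f u, f v) ≤ (C + ε/2) · dist(u, v) for u, v ∈ B̄(p, r'), where C ≥ 0 and ε > 0. If r ∈ (0, r') satisfies (C·r' + (C + ε/2)·r)/(r' − r) ≤ C + ε, then f is (C + ε)-Lipschitz on K' ∪ B̄(p, r). -/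
/-- If `f` is `C`-Lipschitz on `K'` and `(C + ε/2)`-Lipschitz on the closed ball
of radius `r'` around `p ∈ K'`, and if `r < r'` satisfies
`(C·r' + (C + ε/2)·r)/(r' − r) ≤ C + ε`, then `f` is `(C + ε)`-Lipschitz on
`K' ∪ B̄(p, r)`. -/
theorem stmt6 {X Y : Type*} [MetricSpace X] [MetricSpace Y]
    (K' : Set X) (p : X) (hp : p ∈ K') (r' r C ε : ℝ)
    (hr' : 0 < r') (hr : 0 < r) (hrr' : r < r') (hC : 0 ≤ C) (hε : 0 < ε)
    (f : X → Y)
    (hfK : ∀ u ∈ K', ∀ v ∈ K', dist (f u) (f v) ≤ C * dist u v)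
    (hfB : ∀ u ∈ Metric.closedBall p r', ∀ v ∈ Metric.closedBall p r',
      dist (f u) (f v) ≤ (C + ε / 2) * dist u v)
    (hineq : (C * r' + (C + ε / 2) * r) / (r' - r) ≤ C + ε) :
    ∀ u ∈ K' ∪ Metric.closedBall p r, ∀ v ∈ K' ∪ Metric.closedBall p r,
      dist (f u) (f v) ≤ (C + ε) * dist u v := by
  have hball : Metric.closedBall p r ⊆ Metric.closedBall p r' :=
    Metric.closedBall_subset_closedBall hrr'.le
  have hineq' : C * r' + (C + ε / 2) * r ≤ (C + ε) * (r' - r) := by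
    rw [div_le_iff₀ (by linarith)] at hineq; linarith
  have key : ∀ u ∈ K', ∀ v ∈ Metric.closedBall p r,
      dist (f u) (f v) ≤ (C + ε) * dist u v := by
    intro u hu v hv
    by_cases h : u ∈ Metric.closedBall p r'
    · calc dist (f u) (f v) ≤ (C + ε / 2) * dist u v := hfB u h v (hball hv)
        _ ≤ (C + ε) * dist u v := by
          have := dist_nonneg (x := u) (y := v); nlinarith
    · have hup : r' < dist u p := by
        simpa [Metric.mem_closedBall, not_le] using h
      have hvp : dist p v ≤ r := by
        rw [dist_comm]; simpa [Metric.mem_closedBall] using hv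
      have h1 : dist (f u) (f v) ≤ C * dist u p + (C + ε / 2) * r := by
        calc dist (f u) (f v) ≤ dist (f u) (f p) + dist (f p) (f v) :=
              dist_triangle _ _ _
          _ ≤ C * dist u p + (C + ε / 2) * dist p v := by
              gcongr
              · exact hfK u hu p hp
              · exact hfB p (by simp [hr'.le]) v (hball hv)
          _ ≤ C * dist u p + (C + ε / 2) * r := by nlinarith
      have h2 : dist u p - r ≤ dist u v := by
        have h3 : dist v p ≤ r := by rw [dist_comm v p]; exact hvp
        have := dist_triangle u v p; linarith
      nlinarith [hup, h1, h2]
  intro u hu v hv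
  rcases hu with hu | hu <;> rcases hv with hv | hv
  · have := hfK u hu v hv
    nlinarith [dist_nonneg (x := u) (y := v)]
  · exact key u hu v hv
  · rw [dist_comm u v, dist_comm (f u) (f v)]; exact key v hv u hu
  · calc dist (f u) (f v) ≤ (C + ε / 2) * dist u v := hfB u (hball hu) v (hball hv)
      _ ≤ (C + ε) * dist u v := by
        have := dist_nonneg (x := u) (y := v); nlinarith
end

section
/- For all real s, t, θ, the sum of the squares of the four entries of the matrix product diag(e^{−s/2}, e^{s/2}) · [[cos(θ/2), sin(θ/2)], [−sin(θ/2), cos(θ/2)]] · diag(e^{t/2}, e^{−t/2}) equals 2·(cosh s · cosh t − cos θ · sinh s · sinh t). Combined with the identity 2·cosh(dist(i, g•i)) = ‖g‖² for g ∈ SL(2,ℝ), this expresses the hyperbolic law of cosines: two points at distances s and t from a common point, along geodesics making angle θ, are at distance d with cosh d = cosh s cosh t − cos θ sinh s sinh t. -/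
/-- The sum of the squares of the entries of
`diag(e^{−s/2}, e^{s/2}) · R(θ) · diag(e^{t/2}, e^{−t/2})`, where `R(θ)` is the
rotation matrix of angle `θ/2`, equals `2(cosh s cosh t − cos θ sinh s sinh t)`
(the hyperbolic law of cosines, via `2 cosh (dist i (g•i)) = ‖g‖²`). -/
theorem stmt10 (s t θ : ℝ) :
    letI M : Matrix (Fin 2) (Fin 2) ℝ :=
      !![Real.exp (-s / 2), 0; 0, Real.exp (s / 2)] *
        !![Real.cos (θ / 2), Real.sin (θ / 2); -Real.sin (θ / 2), Real.cos (θ / 2)] *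
        !![Real.exp (t / 2), 0; 0, Real.exp (-t / 2)]
    (M 0 0) ^ 2 + (M 0 1) ^ 2 + (M 1 0) ^ 2 + (M 1 1) ^ 2 =
      2 * (Real.cosh s * Real.cosh t - Real.cos θ * Real.sinh s * Real.sinh t) := by
  have hs : Real.exp s = Real.exp (s / 2) ^ 2 := by
    rw [sq, ← Real.exp_add]; ring_nf
  have hs' : Real.exp (-s) = Real.exp (-s / 2) ^ 2 := by
    rw [sq, ← Real.exp_add]; ring_nf
  have ht : Real.exp t = Real.exp (t / 2) ^ 2 := by
    rw [sq, ← Real.exp_add]; ring_nf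
  have ht' : Real.exp (-t) = Real.exp (-t / 2) ^ 2 := by
    rw [sq, ← Real.exp_add]; ring_nf
  have hc : Real.cos θ = 2 * Real.cos (θ / 2) ^ 2 - 1 := by
    have := Real.cos_two_mul (θ / 2)
    rw [show 2 * (θ / 2) = θ by ring] at this
    linarith
  have hsc : Real.sin (θ / 2) ^ 2 + Real.cos (θ / 2) ^ 2 = 1 :=
    Real.sin_sq_add_cos_sq _
  simp [Matrix.mul_apply, Fin.sum_univ_succ]
  rw [Real.cosh_eq, Real.cosh_eq, Real.sinh_eq, Real.sinh_eq, hc, hs, hs', ht, ht']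
  linear_combination ((Real.exp (s / 2) * Real.exp (t / 2)) ^ 2 +
    (Real.exp (-s / 2) * Real.exp (-t / 2)) ^ 2) * hsc
end

section
/- For every real c with 0 < c < 1, the function g(s) = arsinh(c · sinh s) is strictly convex on [0, ∞). -/
/-!
The derivative of `g s = arsinh (c sinh s)` is `c cosh s / √(1 + c² sinh² s)`, which is positive,
and its square is `c² (1 + x) / (1 + c² x)` with `x = sinh² s`. For `c² < 1` this is a strictly
increasing function of `x`, and `sinh²` is strictly increasing on `[0, ∞)`; so `g'` is strictly
increasing there and `g` is strictly convex.
-/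

open Real Set

lemma strictMonoOn_one_add_div_one_add_mul {k : ℝ} (hk0 : 0 ≤ k) (hk1 : k < 1) :
    StrictMonoOn (fun x : ℝ => (1 + x) / (1 + k * x)) (Ici 0) := by
  intro x hx y hy hxy
  simp only [mem_Ici] at hx hy
  rw [div_lt_div_iff₀ (by positivity) (by positivity)]
  nlinarith [mul_pos (sub_pos.2 hk1) (sub_pos.2 hxy)]

lemma strictMonoOn_sinh_sq : StrictMonoOn (fun s : ℝ => sinh s ^ 2) (Ici 0) := by
  intro a ha b _ hab
  exact pow_lt_pow_left₀ (sinh_lt_sinh.2 hab) (sinh_nonneg_iff.2 ha) two_ne_zero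

lemma hasDerivAt_arsinh_const_mul_sinh (c s : ℝ) :
    HasDerivAt (fun s => arsinh (c * sinh s)) (c * cosh s / √(1 + (c * sinh s) ^ 2)) s := by
  have h := (hasDerivAt_arsinh (c * sinh s)).comp s ((hasDerivAt_sinh s).const_mul c)
  rw [inv_mul_eq_div] at h
  exact h

lemma sq_div_sqrt_one_add_sq_mul_sinh (c s : ℝ) :
    (c * cosh s / √(1 + (c * sinh s) ^ 2)) ^ 2
      = c ^ 2 * ((1 + sinh s ^ 2) / (1 + c ^ 2 * sinh s ^ 2)) := by
  rw [div_pow, sq_sqrt (by positivity), mul_pow, mul_pow, cosh_sq]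
  ring

/-- For `0 < c < 1`, the function `s ↦ arsinh (c · sinh s)` is strictly convex
on `[0, ∞)`. -/
theorem stmt15 (c : ℝ) (hc0 : 0 < c) (hc1 : c < 1) :
    StrictConvexOn ℝ (Set.Ici (0 : ℝ)) (fun s => Real.arsinh (c * Real.sinh s)) := by
  have hderiv : deriv (fun s => arsinh (c * sinh s))
      = fun s => c * cosh s / √(1 + (c * sinh s) ^ 2) :=
    funext fun s => (hasDerivAt_arsinh_const_mul_sinh c s).deriv
  have hratio := strictMonoOn_one_add_div_one_add_mul (sq_nonneg c) (by nlinarith)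
  refine StrictMonoOn.strictConvexOn_of_deriv (convex_Ici 0)
    (continuous_arsinh.comp (continuous_const.mul continuous_sinh)).continuousOn ?_
  rw [hderiv, interior_Ici]
  intro a ha b hb hab
  have hsq := strictMonoOn_sinh_sq (Ioi_subset_Ici_self ha) (Ioi_subset_Ici_self hb) hab
  have hpos : 0 ≤ c * cosh b / √(1 + (c * sinh b) ^ 2) := by positivity
  refine lt_of_pow_lt_pow_left₀ 2 hpos ?_
  rw [sq_div_sqrt_one_add_sq_mul_sinh, sq_div_sqrt_one_add_sq_mul_sinh]
  exact mul_lt_mul_of_pos_left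
    (hratio (sq_nonneg (sinh a)) (sq_nonneg (sinh b)) hsq) (by positivity)
end

section
/- For every real C > 1 there exists η₀ > 0 such that for all η ∈ (0, η₀] and all θ ∈ [0, π], if ((cosh η + cos θ)/2)^C + ((cosh η − cos θ)/2)^C ≥ 1, then min(θ, π − θ) ≤ 2·η. -/
/-!
Reduce to `cos θ ≥ 0` by `θ ↦ π - θ`, so that `u = (cosh η + cos θ)/2 ≥ v = (cosh η - cos θ)/2`,
and put `y = v / u ∈ [0, 1]`. Bernoulli's inequality `(1 + y)^C ≥ 1 + C y` turns `u^C + v^C ≥ 1`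
into `y (C - cosh^C η · y^(C-1)) ≤ cosh^C η - 1 ≤ (9/16) C η²`. Bounding `y^(C-1) ≤ 1` gives
a crude `y = O(η²)`; for small `η` this makes `y^(C-1) ≤ 1/8`, and then `y ≤ (9/14) η²`.
Since `cos θ = cosh η · (1 - y)/(1 + y) ≥ 1 - 2y` and `cos 2η ≤ 1 - 2η² + (5/6)η⁴`,
we get `cos θ ≥ cos 2η`, i.e. `θ ≤ 2η`.
-/

open Real

lemma one_add_mul_div_le_add_rpow_mul {u v C : ℝ} (hu : 0 < u) (hv : 0 ≤ v) (hC : 1 ≤ C)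
    (h : 1 ≤ u ^ C + v ^ C) :
    1 + C * (v / u) ≤ (u + v) ^ C * (1 + (v / u) ^ C) := by
  have hvu : 0 ≤ v / u := div_nonneg hv hu.le
  have hsplit : u + v = u * (1 + v / u) := by field_simp
  have hsum : u ^ C * (1 + (v / u) ^ C) = u ^ C + v ^ C := by
    rw [div_rpow hv hu.le, mul_add, mul_div_cancel₀ _ (rpow_pos_of_pos hu C).ne', mul_one]
  have bernoulli : 1 + C * (v / u) ≤ (1 + v / u) ^ C :=
    one_add_mul_self_le_rpow_one_add (by linarith) hC
  calc 1 + C * (v / u) ≤ (1 + C * (v / u)) * (u ^ C + v ^ C) :=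
        le_mul_of_one_le_right (by positivity) h
    _ = u ^ C * (1 + C * (v / u)) * (1 + (v / u) ^ C) := by rw [← hsum]; ring
    _ ≤ u ^ C * (1 + v / u) ^ C * (1 + (v / u) ^ C) := by gcongr
    _ = (u + v) ^ C * (1 + (v / u) ^ C) := by rw [hsplit, mul_rpow hu.le (by linarith)]

lemma mul_le_of_one_add_mul_le {y C ε : ℝ} (hC : 1 < C) (hy₀ : 0 ≤ y) (hy₁ : y ≤ 1)
    (hε₀ : 0 ≤ ε) (hε : ε ≤ (C - 1) / 2 * (1 / 8) ^ (C - 1)⁻¹)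
    (h : 1 + C * y ≤ (1 + ε) * (1 + y ^ C)) :
    7 * C * y ≤ 8 * ε := by
  have hC₁ : 0 < C - 1 := by linarith
  have hpow : y ^ C = y * y ^ (C - 1) := by
    rw [← rpow_one_add' hy₀ (by linarith), add_sub_cancel]
  have key : y * (C - (1 + ε) * y ^ (C - 1)) ≤ ε := by rw [hpow] at h; linarith
  have hroot : (1 / 8 : ℝ) ^ (C - 1)⁻¹ ≤ 1 :=
    rpow_le_one (by norm_num) (by norm_num) (by positivity)
  have hε₁ : ε ≤ (C - 1) / 2 := by nlinarith
  have hcrude : y ≤ (1 / 8) ^ (C - 1)⁻¹ := by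
    have hpow_le : (1 + ε) * y ^ (C - 1) ≤ 1 + ε :=
      mul_le_of_le_one_right (by linarith) (rpow_le_one hy₀ hy₁ hC₁.le)
    have hlin : y * ((C - 1) / 2) ≤ ε := by nlinarith
    nlinarith
  have hsmall : (1 + ε) * y ^ (C - 1) ≤ C / 8 := by
    have hpow_small : y ^ (C - 1) ≤ 1 / 8 := by
      calc y ^ (C - 1) ≤ ((1 / 8 : ℝ) ^ (C - 1)⁻¹) ^ (C - 1) := by gcongr
        _ = 1 / 8 := rpow_inv_rpow (by norm_num) hC₁.ne'
    nlinarith [rpow_nonneg hy₀ (C - 1)]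
  nlinarith

lemma cosh_rpow_sub_one_le {η C : ℝ} (hC : 0 ≤ C) (hη : C * η ^ 2 ≤ 1 / 4) :
    cosh η ^ C - 1 ≤ 9 / 16 * C * η ^ 2 := by
  have ht₀ : 0 ≤ C * η ^ 2 / 2 := by positivity
  have hexp : cosh η ^ C ≤ exp (C * η ^ 2 / 2) := by
    calc cosh η ^ C ≤ exp (η ^ 2 / 2) ^ C := by gcongr; exact cosh_le_exp_half_sq η
      _ = exp (C * η ^ 2 / 2) := by rw [← exp_mul]; ring_nf
  have htaylor := abs_le.1 (abs_exp_sub_one_sub_id_le (x := C * η ^ 2 / 2)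
    (by rw [abs_of_nonneg ht₀]; linarith))
  nlinarith [htaylor.2]

lemma cos_two_mul_le {η : ℝ} (hη₀ : 0 ≤ η) (hη : η ≤ 1 / 2) :
    cos (2 * η) ≤ 1 - 2 * η ^ 2 + 5 / 6 * η ^ 4 := by
  have h := abs_le.1 (cos_bound (x := 2 * η) (by rw [abs_of_nonneg (by positivity)]; linarith))
  rw [abs_of_nonneg (by positivity)] at h
  linarith [h.2]

lemma le_two_mul_of_cos_nonneg {C η θ : ℝ} (hC : 1 < C) (hη₀ : 0 < η) (hη₁ : C * η ^ 2 ≤ 1 / 4)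
    (hη₂ : 9 / 16 * C * η ^ 2 ≤ (C - 1) / 2 * (1 / 8) ^ (C - 1)⁻¹)
    (hθ₀ : 0 ≤ θ) (hθ : θ ≤ π) (hcos : 0 ≤ cos θ)
    (h : 1 ≤ ((cosh η + cos θ) / 2) ^ C + ((cosh η - cos θ) / 2) ^ C) :
    θ ≤ 2 * η := by
  set s := cosh η
  set c := cos θ
  have hs : 1 ≤ s := one_le_cosh η
  have hc : c ≤ 1 := cos_le_one θ
  set y := ((s - c) / 2) / ((s + c) / 2) with hy
  have hy₀ : 0 ≤ y := div_nonneg (by linarith) (by linarith)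
  have hy₁ : y ≤ 1 := div_le_one_of_le₀ (by linarith) (by linarith)
  have hratio := one_add_mul_div_le_add_rpow_mul (by linarith) (by linarith) hC.le h
  rw [← hy, show (s + c) / 2 + (s - c) / 2 = s by ring, ← add_sub_cancel 1 (s ^ C)] at hratio
  have hε : s ^ C - 1 ≤ 9 / 16 * C * η ^ 2 := cosh_rpow_sub_one_le (by linarith) hη₁
  have hy₂ : 7 * C * y ≤ 8 * (s ^ C - 1) :=
    mul_le_of_one_add_mul_le hC hy₀ hy₁
      (by linarith [one_le_rpow hs (by linarith : 0 ≤ C)]) (hε.trans hη₂) hratio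
  have hy₃ : 7 * y ≤ 9 / 2 * η ^ 2 := by nlinarith
  have hcy : c * (1 + y) = s * (1 - y) := by
    rw [hy]; field_simp; ring
  have hη : η ≤ 1 / 2 := by nlinarith
  have hc₂ : 1 - 2 * y ≤ c := by
    nlinarith [mul_le_mul_of_nonneg_right hs (by linarith : 0 ≤ 1 - y)]
  have hcos₂ : cos (2 * η) ≤ c := by
    nlinarith [cos_two_mul_le hη₀.le hη, mul_le_mul_of_nonneg_left hη (by positivity : 0 ≤ η ^ 3)]
  exact (strictAntiOn_cos.le_iff_ge ⟨by linarith, by linarith [pi_gt_three]⟩ ⟨hθ₀, hθ⟩).1 hcos₂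

/-- For every `C > 1` there is `η₀ > 0` such that for all `η ∈ (0, η₀]` and
`θ ∈ [0, π]`, the inequality
`((cosh η + cos θ)/2)^C + ((cosh η − cos θ)/2)^C ≥ 1` forces
`min θ (π − θ) ≤ 2η`. -/
theorem stmt18 (C : ℝ) (hC : 1 < C) :
    ∃ η₀ > (0 : ℝ), ∀ η θ : ℝ, 0 < η → η ≤ η₀ → 0 ≤ θ → θ ≤ Real.pi →
      1 ≤ ((Real.cosh η + Real.cos θ) / 2) ^ C + ((Real.cosh η - Real.cos θ) / 2) ^ C →
      min θ (Real.pi - θ) ≤ 2 * η := by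
  set κ := min (1 / 4) (8 / 9 * (C - 1) * (1 / 8) ^ (C - 1)⁻¹)
  have hκ : 0 < κ := lt_min (by norm_num) (by have := sub_pos.2 hC; positivity)
  refine ⟨√(κ / C), by positivity, fun η θ hη₀ hη hθ₀ hθ h ↦ ?_⟩
  have hCη : C * η ^ 2 ≤ κ := by
    rw [le_sqrt hη₀.le (by positivity), le_div_iff₀ (by linarith)] at hη
    linarith
  have hη₁ : C * η ^ 2 ≤ 1 / 4 := hCη.trans (min_le_left _ _)
  have hη₂ : 9 / 16 * C * η ^ 2 ≤ (C - 1) / 2 * (1 / 8) ^ (C - 1)⁻¹ := by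
    linarith [hCη.trans (min_le_right _ _)]
  rcases le_total 0 (cos θ) with hcos | hcos
  · exact (min_le_left _ _).trans (le_two_mul_of_cos_nonneg hC hη₀ hη₁ hη₂ hθ₀ hθ hcos h)
  · refine (min_le_right _ _).trans (le_two_mul_of_cos_nonneg hC hη₀ hη₁ hη₂ (by linarith)
      (by linarith) (by rw [cos_pi_sub]; linarith) ?_)
    rwa [cos_pi_sub, sub_neg_eq_add, ← sub_eq_add_neg, add_comm]
end
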